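/- arXiv:2405.08366 — 2 statements merged into one kernel-verified Lean document; each statement's English description precedes it below -/
import Mathlib

section
/- Suppose attribute a_i is independent of every other attribute, i.e. for all l ≠ i and all v_i ∈ S_i, v_l ∈ S_l, μ({p : a_i(p) = v_i and a_l(p) = v_l}) = μ({p : a_i(p) = v_i}) · μ({p : a_l(p) = v_l}), and that μ({p : a_i(p) = v}) > 0 for every v ∈ S_i. Then for any feature dictionary U minimizing the population MSE objective L(U) = E_{p∼μ} ‖x(p) − Σ_{l∈I} u_{l, a_l(p)}‖₂², the following are equivalent: (1) the conditional means E_μ[x | a_i = v] are equal to the overall mean E_μ[x] for every v ∈ S_i; (2) the features for attribute i are constant, i.e. there exists a vector c ∈ ℝ^d with u_{i,v} = c for all v ∈ S_i. -/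
open Finset

lemma mse_stationary {d : ℕ} {P : Type*} [Fintype P] {I : Type*} [Fintype I] [DecidableEq I]
    {S : I → Type*} [∀ i, Fintype (S i)] [∀ i, DecidableEq (S i)]
    (μ : P → ℝ)
    (a : (i : I) → P → S i) (x : P → EuclideanSpace ℝ (Fin d))
    (i : I)
    (hpos : ∀ v : S i, 0 < ∑ p ∈ Finset.univ.filter fun p => a i p = v, μ p)
    (u : (l : I) → S l → EuclideanSpace ℝ (Fin d))
    (hmin : ∀ u' : (l : I) → S l → EuclideanSpace ℝ (Fin d),
      ∑ p : P, μ p * ‖x p - ∑ l : I, u l (a l p)‖ ^ 2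
        ≤ ∑ p : P, μ p * ‖x p - ∑ l : I, u' l (a l p)‖ ^ 2)
    (v : S i) :
    ∑ p ∈ Finset.univ.filter (fun p => a i p = v),
      μ p • (x p - ∑ l : I, u l (a l p)) = 0 := by
  set μv := ∑ p ∈ Finset.univ.filter fun p => a i p = v, μ p with hμv
  have hμvpos := hpos v
  set r : P → EuclideanSpace ℝ (Fin d) := fun p => x p - ∑ l : I, u l (a l p) with hr
  set g : EuclideanSpace ℝ (Fin d) :=
    ∑ p ∈ Finset.univ.filter (fun p => a i p = v), μ p • r p with hg
  set u' : (l : I) → S l → EuclideanSpace ℝ (Fin d) :=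
    Function.update u i (Function.update (u i) v (u i v + μv⁻¹ • g)) with hu'
  have hdiff : ∀ p, (∑ l : I, u' l (a l p))
      = (∑ l : I, u l (a l p)) + (if a i p = v then μv⁻¹ • g else 0) := by
    intro p
    have h1 : ∀ l, u' l (a l p)
        = u l (a l p) + (if l = i then (if a i p = v then μv⁻¹ • g else 0) else 0) := by
      intro l
      by_cases hl : l = i
      · subst hl
        simp only [hu', Function.update_self, if_pos rfl]
        by_cases hv : a l p = v
        · rw [hv]; simp [Function.update_self]
        · rw [Function.update_of_ne hv]; simp [hv]
      · rw [hu', Function.update_of_ne hl]; simp [hl]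
    rw [Finset.sum_congr rfl (fun l _ => h1 l), Finset.sum_add_distrib]
    congr 1
    simp
  have hterm : ∀ p, μ p * ‖x p - ∑ l : I, u' l (a l p)‖ ^ 2
      = μ p * ‖r p‖ ^ 2
        + (if a i p = v then
            μ p * (-(2 * μv⁻¹) * (inner ℝ (r p) g : ℝ)) + μ p * (μv⁻¹ ^ 2 * ‖g‖ ^ 2) else 0) := by
    intro p
    rw [hdiff]
    by_cases hv : a i p = v
    · simp only [hv, if_true, if_pos]
      have h2 : x p - ((∑ l : I, u l (a l p)) + μv⁻¹ • g) = r p - μv⁻¹ • g := by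
        rw [hr]; exact sub_add_eq_sub_sub _ _ _
      rw [h2, norm_sub_sq_real, real_inner_smul_right, norm_smul]
      have : ‖μv⁻¹‖ ^ 2 = μv⁻¹ ^ 2 := by
        rw [Real.norm_eq_abs, sq_abs]
      rw [mul_pow, this]
      ring
    · simp only [if_neg hv, add_zero]
      rfl
  have hμvne : μv ≠ 0 := ne_of_gt hμvpos
  have hL : ∑ p : P, μ p * ‖x p - ∑ l : I, u' l (a l p)‖ ^ 2
      = (∑ p : P, μ p * ‖r p‖ ^ 2) - μv⁻¹ * ‖g‖ ^ 2 := by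
    rw [Finset.sum_congr rfl (fun p _ => hterm p), Finset.sum_add_distrib]
    congr 1
    rw [← Finset.sum_filter, Finset.sum_add_distrib]
    have e1 : ∑ p ∈ Finset.univ.filter (fun p => a i p = v),
        μ p * (-(2 * μv⁻¹) * (inner ℝ (r p) g : ℝ))
        = -(2 * μv⁻¹) * ‖g‖ ^ 2 := by
      have : ∀ p ∈ Finset.univ.filter (fun p => a i p = v),
          μ p * (-(2 * μv⁻¹) * (inner ℝ (r p) g : ℝ))
            = -(2 * μv⁻¹) * (inner ℝ (μ p • r p) g : ℝ) := by
        intro p _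
        rw [real_inner_smul_left]; ring
      rw [Finset.sum_congr rfl this, ← Finset.mul_sum, ← sum_inner,
        ← hg, real_inner_self_eq_norm_sq]
    have e2 : ∑ p ∈ Finset.univ.filter (fun p => a i p = v),
        μ p * (μv⁻¹ ^ 2 * ‖g‖ ^ 2) = μv * (μv⁻¹ ^ 2 * ‖g‖ ^ 2) := by
      rw [← Finset.sum_mul, ← hμv]
    rw [e1, e2]
    field_simp
    ring
  have hle := hmin u'
  rw [hL] at hle
  have h0 : 0 ≤ μv⁻¹ * ‖g‖ ^ 2 := by positivity
  have h1 : μv⁻¹ * ‖g‖ ^ 2 ≤ 0 := by linarith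
  have h2 : ‖g‖ ^ 2 = 0 := by
    have hinv : 0 < μv⁻¹ := inv_pos.mpr hμvpos
    nlinarith
  have : g = 0 := by
    rwa [pow_eq_zero_iff (by norm_num), norm_eq_zero] at h2
  exact this


/-- Population MSE feature dictionaries with an independent attribute: if
attribute `i` is independent of every other attribute and every value of `i`
has positive probability, then for any dictionary minimizing the population MSE
objective, the conditional means of the activations given `a i = v` all equal
the overall mean iff the features `u i v` are constant in `v`. -/
theorem mse_independent_attribute_constant_iff_conditional_means_eq
    {d : ℕ} {P : Type*} [Fintype P] {I : Type*} [Fintype I] [DecidableEq I]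
    {S : I → Type*} [∀ i, Fintype (S i)] [∀ i, DecidableEq (S i)]
    (μ : P → ℝ) (hμ0 : ∀ p, 0 ≤ μ p) (hμ1 : ∑ p : P, μ p = 1)
    (a : (i : I) → P → S i) (x : P → EuclideanSpace ℝ (Fin d))
    (i : I)
    (hindep : ∀ l : I, l ≠ i → ∀ (vi : S i) (vl : S l),
      (∑ p ∈ Finset.univ.filter fun p => a i p = vi ∧ a l p = vl, μ p)
        = (∑ p ∈ Finset.univ.filter fun p => a i p = vi, μ p)
          * (∑ p ∈ Finset.univ.filter fun p => a l p = vl, μ p))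
    (hpos : ∀ v : S i, 0 < ∑ p ∈ Finset.univ.filter fun p => a i p = v, μ p)
    (u : (l : I) → S l → EuclideanSpace ℝ (Fin d))
    (hmin : ∀ u' : (l : I) → S l → EuclideanSpace ℝ (Fin d),
      ∑ p : P, μ p * ‖x p - ∑ l : I, u l (a l p)‖ ^ 2
        ≤ ∑ p : P, μ p * ‖x p - ∑ l : I, u' l (a l p)‖ ^ 2) :
    (∀ v : S i,
        (∑ p ∈ Finset.univ.filter fun p => a i p = v, μ p)⁻¹ •
            ∑ p ∈ Finset.univ.filter fun p => a i p = v, μ p • x p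
          = ∑ p : P, μ p • x p)
      ↔ ∃ c : EuclideanSpace ℝ (Fin d), ∀ v : S i, u i v = c := by
  classical
  set μv : S i → ℝ := fun v => ∑ p ∈ Finset.univ.filter fun p => a i p = v, μ p with hμvdef
  set C : EuclideanSpace ℝ (Fin d) :=
    ∑ l ∈ Finset.univ.erase i, ∑ w : S l,
      (∑ p ∈ Finset.univ.filter fun p => a l p = w, μ p) • u l w with hC
  -- Step A
  have stepA : ∀ v : S i,
      (∑ p ∈ Finset.univ.filter fun p => a i p = v, μ p • x p)
        = μv v • u i v + μv v • C := by
    intro v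
    have hst := mse_stationary μ a x i hpos u hmin v
    rw [Finset.sum_congr rfl (fun p _ => smul_sub (μ p) (x p) (∑ l : I, u l (a l p))),
      Finset.sum_sub_distrib, sub_eq_zero] at hst
    rw [hst]
    have swap : ∑ p ∈ Finset.univ.filter (fun p => a i p = v),
        μ p • ∑ l : I, u l (a l p)
        = ∑ l : I, ∑ p ∈ Finset.univ.filter (fun p => a i p = v), μ p • u l (a l p) := by
      rw [Finset.sum_congr rfl fun p _ => Finset.smul_sum (s := Finset.univ)
        (r := μ p) (f := fun l => u l (a l p)), Finset.sum_comm]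
    rw [swap]
    have hTi : ∑ p ∈ Finset.univ.filter (fun p => a i p = v), μ p • u i (a i p)
        = μv v • u i v := by
      rw [Finset.sum_congr rfl (fun p hp => by
        rw [(Finset.mem_filter.mp hp).2]), ← Finset.sum_smul]
    have hTl : ∀ l ∈ Finset.univ.erase i,
        ∑ p ∈ Finset.univ.filter (fun p => a i p = v), μ p • u l (a l p)
          = μv v • ∑ w : S l, (∑ p ∈ Finset.univ.filter fun p => a l p = w, μ p) • u l w := by
      intro l hl
      have hlne : l ≠ i := (Finset.mem_erase.mp hl).1
      rw [← Finset.sum_fiberwise (Finset.univ.filter fun p => a i p = v) (fun p => a l p)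
        (fun p => μ p • u l (a l p))]
      rw [Finset.smul_sum]
      refine Finset.sum_congr rfl fun w _ => ?_
      have : ∀ p ∈ (Finset.univ.filter fun p => a i p = v).filter (fun p => a l p = w),
          μ p • u l (a l p) = μ p • u l w := by
        intro p hp
        rw [(Finset.mem_filter.mp hp).2]
      rw [Finset.sum_congr rfl this, ← Finset.sum_smul, Finset.filter_filter,
        hindep l hlne v w, smul_smul]
    rw [← Finset.add_sum_erase _ _ (Finset.mem_univ i), hTi,
      Finset.sum_congr rfl hTl, ← Finset.smul_sum]
  have hμvsum : ∑ v : S i, μv v = 1 := by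
    rw [hμvdef]
    rw [Finset.sum_fiberwise Finset.univ (a i) μ, hμ1]
  have hM : (∑ p : P, μ p • x p) = (∑ v : S i, μv v • u i v) + C := by
    rw [← Finset.sum_fiberwise Finset.univ (a i) (fun p => μ p • x p),
      Finset.sum_congr rfl (fun v _ => stepA v), Finset.sum_add_distrib,
      ← Finset.sum_smul, hμvsum, one_smul]
  have hcond : ∀ v : S i,
      (∑ p ∈ Finset.univ.filter fun p => a i p = v, μ p)⁻¹ •
        (∑ p ∈ Finset.univ.filter fun p => a i p = v, μ p • x p) = u i v + C := by
    intro v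
    rw [stepA v, ← smul_add]
    exact inv_smul_smul₀ (ne_of_gt (hpos v)) _
  constructor
  · intro h
    refine ⟨(∑ p : P, μ p • x p) - C, fun v => ?_⟩
    have hv := h v
    rw [hcond v] at hv
    exact eq_sub_of_add_eq hv
  · rintro ⟨c, hc⟩ v
    rw [hcond v, hc v, hM]
    have : ∑ w : S i, μv w • u i w = c := by
      rw [Finset.sum_congr rfl (fun w _ => by rw [hc w]), ← Finset.sum_smul, hμvsum, one_smul]
    rw [this]
end

section
/- The expected cross-entropy loss of a linear classifier is minimized at a constant predictor if and only if all class-conditional means equal the overall mean: let μ be a probability mass function on a finite set P, x : P → ℝ^n, and c : P → {1, …, k} a labeling with μ({c = j}) > 0 for every class j. For W ∈ ℝ^{k×n} and b ∈ ℝ^k define the loss L(W, b) = E_{p∼μ}[ −log( softmax(W x(p) + b)_{c(p)} ) ]. Then there exists b* ∈ ℝ^k with L(0, b*) ≤ L(W, b) for all (W, b) if and only if E_μ[x | c = j] = E_μ[x] for every class j ∈ {1, …, k}. -/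
private lemma ce_jensen {k : ℕ} (q d : Fin k → ℝ) (hq0 : ∀ j, 0 ≤ q j) (hq1 : ∑ j, q j = 1) :
    ∑ j, q j * d j ≤ Real.log (∑ j, q j * Real.exp (d j)) := by
  have h := convexOn_exp.map_sum_le (t := Finset.univ) (w := q) (p := d)
    (fun j _ => hq0 j) hq1 (fun j _ => Set.mem_univ _)
  calc ∑ j, q j * d j = Real.log (Real.exp (∑ j, q j • d j)) := by
        simp [Real.log_exp, smul_eq_mul]
    _ ≤ _ := Real.log_le_log (Real.exp_pos _) (by simpa [smul_eq_mul] using h)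

private lemma ce_first_order {k : ℕ} {P : Type*} [Fintype P] (μ : P → ℝ) (bstar : Fin k → ℝ)
    (c : P → Fin k) (d : P → Fin k → ℝ) (hk : 0 < k)
    (hmin : ∀ t : ℝ,
      (∑ p : P, μ p * (Real.log (∑ j, Real.exp (bstar j + 0 * d p j)) - (bstar (c p) + 0 * d p (c p)))) ≤
      ∑ p : P, μ p * (Real.log (∑ j, Real.exp (bstar j + t * d p j)) - (bstar (c p) + t * d p (c p)))) :
    ∑ p : P, μ p * ((∑ j, Real.exp (bstar j) * d p j) / (∑ j, Real.exp (bstar j)) - d p (c p)) = 0 := by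
  set G : ℝ → ℝ := fun t => ∑ p : P, μ p *
    (Real.log (∑ j, Real.exp (bstar j + t * d p j)) - (bstar (c p) + t * d p (c p))) with hG
  have hSpos : ∀ (p : P) (t : ℝ), 0 < ∑ j, Real.exp (bstar j + t * d p j) := by
    intro p t
    exact Finset.sum_pos (fun j _ => Real.exp_pos _) (Finset.univ_nonempty_iff.2 ⟨⟨0, hk⟩⟩)
  have hD : HasDerivAt G
      (∑ p : P, μ p * ((∑ j, Real.exp (bstar j + 0 * d p j) * d p j) /
        (∑ j, Real.exp (bstar j + 0 * d p j)) - d p (c p))) 0 := by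
    apply HasDerivAt.fun_sum
    intro p _
    apply HasDerivAt.const_mul
    apply HasDerivAt.sub
    · have hs : HasDerivAt (fun t => ∑ j, Real.exp (bstar j + t * d p j))
        (∑ j, Real.exp (bstar j + 0 * d p j) * d p j) 0 := by
        apply HasDerivAt.fun_sum
        intro j _
        exact (((hasDerivAt_mul_const (d p j)).const_add (bstar j)).exp)
      exact hs.log (ne_of_gt (hSpos p 0))
    · exact (hasDerivAt_mul_const (d p (c p))).const_add (bstar (c p))
  have hloc : IsLocalMin G 0 := Filter.Eventually.of_forall (fun t => hmin t)
  have h0 : deriv G 0 = 0 := hloc.deriv_eq_zero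
  rw [hD.deriv] at h0
  simpa using h0

/-- The expected cross-entropy loss of a linear classifier is minimized at a
constant predictor (one with `W = 0`) iff all class-conditional means of the
inputs equal the overall mean. -/
theorem cross_entropy_minimized_at_constant_iff_conditional_means_eq
    {n k : ℕ} {P : Type*} [Fintype P]
    (μ : P → ℝ) (hμ0 : ∀ p, 0 ≤ μ p) (hμ1 : ∑ p : P, μ p = 1)
    (x : P → Fin n → ℝ) (c : P → Fin k)
    (hpos : ∀ j : Fin k, 0 < ∑ p ∈ Finset.univ.filter fun p => c p = j, μ p)
    (L : Matrix (Fin k) (Fin n) ℝ → (Fin k → ℝ) → ℝ)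
    (hL : ∀ (W : Matrix (Fin k) (Fin n) ℝ) (b : Fin k → ℝ),
      L W b = ∑ p : P, μ p *
        (-Real.log (Real.exp ((W.mulVec (x p) + b) (c p)) /
          ∑ j : Fin k, Real.exp ((W.mulVec (x p) + b) j)))) :
    (∃ bstar : Fin k → ℝ,
        ∀ (W : Matrix (Fin k) (Fin n) ℝ) (b : Fin k → ℝ), L 0 bstar ≤ L W b)
      ↔ ∀ j : Fin k,
          (∑ p ∈ Finset.univ.filter fun p => c p = j, μ p)⁻¹ •
              ∑ p ∈ Finset.univ.filter fun p => c p = j, μ p • x p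
            = ∑ p : P, μ p • x p := by
  -- basic setup
  have hP : Nonempty P := by
    by_contra h
    rw [not_nonempty_iff] at h
    simp [Finset.univ_eq_empty] at hμ1
  have hk : 0 < k := Fin.pos_iff_nonempty.2 ⟨c (Classical.arbitrary P)⟩
  set π : Fin k → ℝ := fun j => ∑ p ∈ Finset.univ.filter fun p => c p = j, μ p with hπdef
  have hπpos : ∀ j, 0 < π j := hpos
  have hπ1 : ∑ j, π j = 1 := by
    rw [hπdef, Finset.sum_fiberwise Finset.univ c μ]
    exact hμ1
  set Ei : Fin n → ℝ := fun i => ∑ p : P, μ p * x p i with hEi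
  -- rewrite of the loss
  have hLrw : ∀ (W : Matrix (Fin k) (Fin n) ℝ) (b : Fin k → ℝ),
      L W b = ∑ p : P, μ p * (Real.log (∑ j, Real.exp ((W.mulVec (x p) + b) j)) -
        (W.mulVec (x p) + b) (c p)) := by
    intro W b
    rw [hL]
    refine Finset.sum_congr rfl fun p _ => ?_
    have hS : (0:ℝ) < ∑ j, Real.exp ((W.mulVec (x p) + b) j) :=
      Finset.sum_pos (fun j _ => Real.exp_pos _) (Finset.univ_nonempty_iff.2 ⟨⟨0, hk⟩⟩)
    rw [Real.log_div (Real.exp_ne_zero _) (ne_of_gt hS), Real.log_exp]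
    ring
  constructor
  · -- forward direction
    rintro ⟨bstar, hmin⟩ j
    set Z : ℝ := ∑ j', Real.exp (bstar j') with hZ
    have hZpos : 0 < Z :=
      Finset.sum_pos (fun j _ => Real.exp_pos _) (Finset.univ_nonempty_iff.2 ⟨⟨0, hk⟩⟩)
    have hFO : ∀ (W : Matrix (Fin k) (Fin n) ℝ) (v : Fin k → ℝ),
        ∑ p : P, μ p * ((∑ j', Real.exp (bstar j') * (W.mulVec (x p) j' + v j')) / Z -
          (W.mulVec (x p) (c p) + v (c p))) = 0 := by
      intro W v
      apply ce_first_order μ bstar c (fun p j' => W.mulVec (x p) j' + v j') hk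
      intro t
      have h1 : (∑ p : P, μ p * (Real.log (∑ j', Real.exp (bstar j' +
            0 * (W.mulVec (x p) j' + v j'))) -
            (bstar (c p) + 0 * (W.mulVec (x p) (c p) + v (c p))))) = L 0 bstar := by
        rw [hLrw 0 bstar]
        simp [Matrix.zero_mulVec]
      have h2 : (∑ p : P, μ p * (Real.log (∑ j', Real.exp (bstar j' +
            t * (W.mulVec (x p) j' + v j'))) -
            (bstar (c p) + t * (W.mulVec (x p) (c p) + v (c p))))) =
            L (t • W) (bstar + t • v) := by
        rw [hLrw (t • W) (bstar + t • v)]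
        refine Finset.sum_congr rfl fun p _ => ?_
        have harg : ∀ j', ((t • W).mulVec (x p) + (bstar + t • v)) j' =
            bstar j' + t * (W.mulVec (x p) j' + v j') := by
          intro j'
          simp only [Matrix.smul_mulVec, Pi.add_apply, Pi.smul_apply, smul_eq_mul]
          ring
        simp only [harg]
      rw [h1, h2]
      exact hmin _ _
    -- step 1: softmax(bstar) = π
    have hq : Real.exp (bstar j) / Z = π j := by
      have h := hFO 0 (Pi.single j 1)
      simp only [Matrix.zero_mulVec, Pi.zero_apply, zero_add] at h
      have hsum : ∑ j', Real.exp (bstar j') * (if j' = j then (1:ℝ) else 0) =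
          Real.exp (bstar j) := by
        simp [mul_ite, mul_one, mul_zero]
      simp only [Pi.single_apply] at h
      rw [hsum] at h
      have hexp : ∑ p : P, μ p * (Real.exp (bstar j) / Z -
          (if c p = j then (1:ℝ) else 0)) = Real.exp (bstar j) / Z - π j := by
        simp only [mul_sub]
        rw [Finset.sum_sub_distrib, ← Finset.sum_mul, hμ1, one_mul, hπdef]
        congr 1
        simp only [mul_ite, mul_one, mul_zero]
        rw [← Finset.sum_filter]
      rw [hexp] at h
      linarith
    -- step 2: conditional first moments
    have hstep2 : ∀ i : Fin n, ∑ p ∈ Finset.univ.filter (fun p => c p = j), μ p * x p i =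
        π j * Ei i := by
      intro i
      set W : Matrix (Fin k) (Fin n) ℝ :=
        Matrix.of fun j' i' => if j' = j ∧ i' = i then (1:ℝ) else 0 with hW
      have hmv : ∀ (p : P) (j' : Fin k), W.mulVec (x p) j' =
          if j' = j then x p i else 0 := by
        intro p j'
        simp only [Matrix.mulVec, dotProduct, hW, Matrix.of_apply]
        by_cases hj : j' = j
        · simp [hj, ite_and]
        · simp [hj]
      have h := hFO W 0
      simp only [Pi.zero_apply, add_zero, hmv] at h
      have hsum : ∀ p : P, ∑ j', Real.exp (bstar j') * (if j' = j then x p i else 0) =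
          Real.exp (bstar j) * x p i := by
        intro p
        simp [mul_ite, mul_zero, Finset.sum_ite_eq']
      simp only [hsum] at h
      have hexp : ∑ p : P, μ p * (Real.exp (bstar j) * x p i / Z -
          (if c p = j then x p i else 0)) =
          π j * Ei i - ∑ p ∈ Finset.univ.filter (fun p => c p = j), μ p * x p i := by
        simp only [mul_sub]
        rw [Finset.sum_sub_distrib]
        congr 1
        · rw [hEi, Finset.mul_sum]
          refine Finset.sum_congr rfl fun p _ => ?_
          rw [← hq]
          ring
        · simp only [mul_ite, mul_zero]
          rw [← Finset.sum_filter]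
      rw [hexp] at h
      linarith
    -- conclude
    funext i
    have happ : (∑ p ∈ Finset.univ.filter (fun p => c p = j), μ p • x p) i =
        ∑ p ∈ Finset.univ.filter (fun p => c p = j), μ p * x p i := by
      rw [Finset.sum_apply]
      exact Finset.sum_congr rfl fun p _ => rfl
    have happ2 : (∑ p : P, μ p • x p) i = Ei i := by
      rw [Finset.sum_apply]
      exact Finset.sum_congr rfl fun p _ => rfl
    show (π j)⁻¹ • (∑ p ∈ Finset.univ.filter (fun p => c p = j), μ p • x p) i
        = (∑ p : P, μ p • x p) i
    rw [happ, happ2, hstep2 i, smul_eq_mul,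
      inv_mul_cancel_left₀ (ne_of_gt (hπpos j))]
  · -- backward direction
    intro hmeans
    -- conditional first moments from the hypothesis
    have hxi : ∀ (j : Fin k) (i : Fin n),
        ∑ p ∈ Finset.univ.filter (fun p => c p = j), μ p * x p i = π j * Ei i := by
      intro j i
      have h := congrFun (hmeans j) i
      simp only [Pi.smul_apply, Finset.sum_apply, smul_eq_mul] at h
      have h2 := congrArg (fun y => π j * y) h
      rw [← mul_assoc, mul_inv_cancel₀ (ne_of_gt (hπpos j)), one_mul] at h2
      exact h2
    refine ⟨fun j => Real.log (π j), ?_⟩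
    intro W b
    rw [hLrw, hLrw]
    have hexpπ : ∀ j, Real.exp (Real.log (π j)) = π j := fun j => Real.exp_log (hπpos j)
    -- value of the loss at the constant predictor
    have hL0 : ∑ p : P, μ p * (Real.log (∑ j, Real.exp (((0 : Matrix (Fin k) (Fin n) ℝ).mulVec
        (x p) + fun j => Real.log (π j)) j)) - ((0 : Matrix (Fin k) (Fin n) ℝ).mulVec (x p)
        + fun j => Real.log (π j)) (c p)) = ∑ p : P, μ p * (0 - Real.log (π (c p))) := by
      refine Finset.sum_congr rfl fun p _ => ?_
      have hco : ∀ j : Fin k, ((0 : Matrix (Fin k) (Fin n) ℝ).mulVec (x p)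
          + fun j => Real.log (π j)) j = Real.log (π j) := by
        intro j; simp [Matrix.zero_mulVec]
      simp only [hco, hexpπ, hπ1, Real.log_one]
    rw [hL0]
    set d : P → Fin k → ℝ := fun p j => (W.mulVec (x p) + b) j - Real.log (π j) with hd
    -- per-point Jensen bound
    have hbound : ∀ p : P, (0 - Real.log (π (c p))) + (∑ j, π j * d p j - d p (c p)) ≤
        Real.log (∑ j, Real.exp ((W.mulVec (x p) + b) j)) - (W.mulVec (x p) + b) (c p) := by
      intro p
      have hrw : ∑ j, Real.exp ((W.mulVec (x p) + b) j) = ∑ j, π j * Real.exp (d p j) := by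
        refine Finset.sum_congr rfl fun j' _ => ?_
        simp only [hd]
        rw [Real.exp_sub, Real.exp_log (hπpos j'), mul_comm,
          div_mul_cancel₀ _ (ne_of_gt (hπpos j'))]
      rw [hrw]
      have hj := ce_jensen π (d p) (fun j => le_of_lt (hπpos j)) hπ1
      have hdc : (W.mulVec (x p) + b) (c p) = d p (c p) + Real.log (π (c p)) := by
        simp only [hd]; ring
      rw [hdc]
      linarith
    -- unfolding of mulVec
    have hmvdef : ∀ (p : P) (j' : Fin k), W.mulVec (x p) j' = ∑ i, W j' i * x p i := by
      intro p j'
      simp [Matrix.mulVec, dotProduct]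
    -- weighted sums of d over any subset
    have e1 : ∀ (j' : Fin k) (s : Finset P), ∑ p ∈ s, μ p * d p j' =
        (∑ i, W j' i * ∑ p ∈ s, μ p * x p i) +
          (∑ p ∈ s, μ p) * (b j' - Real.log (π j')) := by
      intro j' s
      have hterm : ∀ p : P, μ p * d p j' =
          (∑ i, W j' i * (μ p * x p i)) + μ p * (b j' - Real.log (π j')) := by
        intro p
        have : ∑ i, W j' i * (μ p * x p i) = μ p * ∑ i, W j' i * x p i := by
          rw [Finset.mul_sum]
          exact Finset.sum_congr rfl fun i _ => by ring
        rw [this]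
        simp only [hd, Pi.add_apply, hmvdef p j']
        ring
      calc ∑ p ∈ s, μ p * d p j'
          = ∑ p ∈ s, ((∑ i, W j' i * (μ p * x p i)) + μ p * (b j' - Real.log (π j'))) :=
            Finset.sum_congr rfl fun p _ => hterm p
        _ = (∑ p ∈ s, ∑ i, W j' i * (μ p * x p i)) +
              ∑ p ∈ s, μ p * (b j' - Real.log (π j')) := Finset.sum_add_distrib
        _ = (∑ i, ∑ p ∈ s, W j' i * (μ p * x p i)) +
              (∑ p ∈ s, μ p) * (b j' - Real.log (π j')) := by
            rw [Finset.sum_comm, Finset.sum_mul]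
        _ = _ := by
            congr 1
            exact Finset.sum_congr rfl fun i _ => by rw [Finset.mul_sum]
    have hEq : ∀ j' : Fin k, ∑ p ∈ Finset.univ.filter (fun p => c p = j'), μ p * d p j' =
        π j' * ∑ p : P, μ p * d p j' := by
      intro j'
      have hπj : ∑ p ∈ Finset.univ.filter (fun p => c p = j'), μ p = π j' := rfl
      rw [e1 j' _, e1 j' Finset.univ, hμ1, hπj]
      have hx : ∑ i, W j' i * ∑ p ∈ Finset.univ.filter (fun p => c p = j'), μ p * x p i =
          π j' * ∑ i, W j' i * Ei i := by
        rw [Finset.mul_sum]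
        refine Finset.sum_congr rfl fun i _ => ?_
        rw [hxi j' i]
        ring
      rw [hx]
      ring
    -- the correction term vanishes
    have hzero : ∑ p : P, μ p * (∑ j, π j * d p j - d p (c p)) = 0 := by
      have hA : ∑ p : P, μ p * ∑ j, π j * d p j = ∑ j, π j * ∑ p : P, μ p * d p j := by
        calc ∑ p : P, μ p * ∑ j, π j * d p j
            = ∑ p : P, ∑ j, π j * (μ p * d p j) := by
              refine Finset.sum_congr rfl fun p _ => ?_
              rw [Finset.mul_sum]
              exact Finset.sum_congr rfl fun j' _ => by ring
          _ = ∑ j, ∑ p : P, π j * (μ p * d p j) := Finset.sum_comm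
          _ = ∑ j, π j * ∑ p : P, μ p * d p j :=
              Finset.sum_congr rfl fun j' _ => by rw [Finset.mul_sum]
      have hB : ∑ p : P, μ p * d p (c p) = ∑ j, π j * ∑ p : P, μ p * d p j := by
        rw [← Finset.sum_fiberwise Finset.univ c (fun p => μ p * d p (c p))]
        refine Finset.sum_congr rfl fun j' _ => ?_
        rw [← hEq j']
        exact Finset.sum_congr rfl fun p hp => by rw [(Finset.mem_filter.1 hp).2]
      simp only [mul_sub]
      rw [Finset.sum_sub_distrib, hA, hB, sub_self]
    -- combine
    have hEqsum : ∑ p : P, μ p * ((0 - Real.log (π (c p))) + (∑ j, π j * d p j - d p (c p))) =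
        ∑ p : P, μ p * (0 - Real.log (π (c p))) := by
      simp only [mul_add]
      rw [Finset.sum_add_distrib, hzero, add_zero]
    rw [← hEqsum]
    exact Finset.sum_le_sum fun p _ => mul_le_mul_of_nonneg_left (hbound p) (hμ0 p)
end
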